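/- Let G be a finite group acting on F^n by permuting coordinates via a homomorphism into GL_n(F), and let Z ⊆ F^n be a finite G-stable point set. Then the vanishing ideal I(Z) and its associated graded ideal gr I(Z) are G-stable ideals of S = F[x_1,...,x_n], so G acts on the quotient ring R(Z) = S/gr I(Z), and if #G is invertible in F then R(Z) ≅ F[Z] as (ungraded) G-modules, where F[Z] is the permutation module on Z. -/

import Mathlib

/-- The vanishing ideal of a set of points of `F^n`. -/
noncomputable def vanishingIdeal (F : Type*) [Field F] {σ : Type*} (Z : Set (σ → F)) :
    Ideal (MvPolynomial σ F) :=
  ⨅ z ∈ Z, RingHom.ker (MvPolynomial.eval z)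

/-- The associated graded ideal `gr I(Z)`, generated by the top-degree
homogeneous components of the nonzero elements of `I(Z)`. -/
noncomputable def grIdeal (F : Type*) [Field F] {σ : Type*} (Z : Set (σ → F)) :
    Ideal (MvPolynomial σ F) :=
  Ideal.span {g | ∃ f ∈ vanishingIdeal F Z, f ≠ 0 ∧
    g = MvPolynomial.homogeneousComponent f.totalDegree f}

/-!
The degree-`d` part of `gr I(Z)` is the space `W_d` of degree-`d` components of elements of
`I(Z)` of degree `≤ d`. It is `G`-stable, so by Maschke's theorem it has a `G`-stable complement
`H_d` in the forms of degree `d`. The sum `H` of the `H_d` is a `G`-stable complement of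
`gr I(Z)` (degree by degree) and also of `I(Z)` (by induction on the degree, peeling off top-degree
forms). Hence `S ⧸ gr I(Z) ≅ H ≅ S ⧸ I(Z) ≅ F[Z]`, the last map being evaluation, which is onto by
the Chinese remainder theorem; every map commutes with `G` since `H`, `I(Z)` and `gr I(Z)` are
`G`-stable.
-/

section

open MvPolynomial hiding vanishingIdeal

namespace MvPolynomial

variable {σ R : Type*} [CommSemiring R]

theorem homogeneousComponent_totalDegree_ne_zero {p : MvPolynomial σ R} (hp : p ≠ 0) :
    homogeneousComponent p.totalDegree p ≠ 0 := by
  obtain ⟨d, hd, hdeg⟩ := Finset.exists_mem_eq_sup p.support (support_nonempty.2 hp)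
    fun d => d.degree
  rw [Ne, ← support_eq_empty, support_homogeneousComponent, Finset.filter_eq_empty_iff]
  exact fun h => h hd hdeg.symm

attribute [local instance] gradedAlgebra in
theorem homogeneousComponent_mul_of_isHomogeneous_left {p q : MvPolynomial σ R} {k : ℕ}
    (hp : p.IsHomogeneous k) (n : ℕ) :
    homogeneousComponent n (p * q) =
      if k ≤ n then p * homogeneousComponent (n - k) q else 0 := by
  have hdec (m : ℕ) (r : MvPolynomial σ R) :
      (DirectSum.decompose (homogeneousSubmodule σ R) r m : MvPolynomial σ R) =
        homogeneousComponent m r :=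
    decomposition.decompose'_apply r m
  simpa only [hdec] using
    DirectSum.coe_decompose_mul_of_left_mem (homogeneousSubmodule σ R) n (b := q) hp

theorem homogeneousComponent_mem_of_mem_iSup {H : ℕ → Submodule R (MvPolynomial σ R)}
    (hH : ∀ d, H d ≤ homogeneousSubmodule σ R d) {p : MvPolynomial σ R} (hp : p ∈ ⨆ d, H d)
    (n : ℕ) : homogeneousComponent n p ∈ H n := by
  induction hp using Submodule.iSup_induction' with
  | mem d q hq =>
    rw [homogeneousComponent_of_mem (hH d hq)]
    split_ifs with h
    · exact h ▸ hq
    · exact zero_mem _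
  | zero => simp
  | add q r _ _ hq hr => simpa using add_mem hq hr

variable (R) in
noncomputable def renameRepresentation {G : Type*} [Monoid G] (φ : G →* Equiv.Perm σ) :
    Representation R G (MvPolynomial σ R) where
  toFun g := (rename (φ g)).toLinearMap
  map_one' := by ext; simp
  map_mul' a b := by ext; simp [rename_rename]

end MvPolynomial

namespace Submodule

variable {R E : Type*} [Ring R] [AddCommGroup E] [Module R E]

theorem projection_apply_comm_of_mapsTo {p q : Submodule R E} (h : IsCompl p q) (T : E →ₗ[R] E)
    (hp : ∀ x ∈ p, T x ∈ p) (hq : ∀ x ∈ q, T x ∈ q) (x : E) :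
    p.projection q h (T x) = T (p.projection q h x) := by
  obtain ⟨a, ha, b, hb, rfl⟩ := Submodule.mem_sup.1 (h.codisjoint.eq_top ▸ mem_top : x ∈ p ⊔ q)
  simp [projection_apply_of_mem_left h ha, projection_apply_of_mem_left h (hp a ha),
    projection_apply_of_mem_right h hb, projection_apply_of_mem_right h (hq b hb)]

end Submodule

namespace Representation

variable {k G V : Type*} [Field k] [Group G] [Finite G] [NeZero (Nat.card G : k)]
  [AddCommGroup V] [Module k V]

theorem exists_invariant_complement_of_le (ρ : Representation k G V) {W S : Submodule k V}
    (hWS : W ≤ S) (hW : ∀ g, ∀ v ∈ W, ρ g v ∈ W) (hS : ∀ g, ∀ v ∈ S, ρ g v ∈ S) :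
    ∃ H : Submodule k V, (∀ g, ∀ v ∈ H, ρ g v ∈ H) ∧ Disjoint H W ∧ H ⊔ W = S := by
  obtain ⟨C, hC⟩ := exists_isCompl (⟨W, fun g _ hv => hW g _ hv⟩ : Subrepresentation ρ)
  have hdisj : Disjoint C.toSubmodule W :=
    disjoint_iff.2 (congrArg Subrepresentation.toSubmodule hC.symm.disjoint.eq_bot)
  have hcodisj : W ⊔ C.toSubmodule = ⊤ :=
    congrArg Subrepresentation.toSubmodule hC.codisjoint.eq_top
  refine ⟨C.toSubmodule ⊓ S, fun g v hv => ⟨C.apply_mem_toSubmodule g hv.1, hS g v hv.2⟩,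
    hdisj.mono_left inf_le_left, ?_⟩
  rw [sup_comm, ← sup_inf_assoc_of_le C.toSubmodule hWS, hcodisj, top_inf_eq]

end Representation

variable {F σ : Type*} [Field F] {Z : Set (σ → F)}

theorem mem_vanishingIdeal {f : MvPolynomial σ F} :
    f ∈ vanishingIdeal F Z ↔ ∀ z ∈ Z, eval z f = 0 := by
  simp [vanishingIdeal]

theorem rename_mem_vanishingIdeal {e : σ → σ} (he : ∀ z ∈ Z, z ∘ e ∈ Z)
    {f : MvPolynomial σ F} (hf : f ∈ vanishingIdeal F Z) :
    rename e f ∈ vanishingIdeal F Z := by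
  rw [mem_vanishingIdeal] at hf ⊢
  intro z hz
  rw [eval_rename]
  exact hf _ (he z hz)

theorem MvPolynomial.ker_eval_injective :
    Function.Injective fun z : σ → F => RingHom.ker (eval z) := by
  intro z z' h
  funext i
  have hi : X i - C (z' i) ∈ RingHom.ker (eval z) := by
    simp only at h
    rw [h]
    simp [RingHom.mem_ker]
  simpa [RingHom.mem_ker, sub_eq_zero] using hi

theorem exists_eval_eq_of_finite (hZ : Z.Finite) (w : Z → F) :
    ∃ f : MvPolynomial σ F, ∀ z : Z, eval (z : σ → F) f = w z := by
  have := hZ.to_subtype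
  have hmax (z : σ → F) : (RingHom.ker (eval z)).IsMaximal :=
    RingHom.ker_isMaximal_of_surjective _ fun c => ⟨C c, eval_C c⟩
  have hcop : Pairwise fun z z' : Z =>
      IsCoprime (RingHom.ker (eval (z : σ → F))) (RingHom.ker (eval (z' : σ → F))) :=
    fun z z' hne => Ideal.isCoprime_of_isMaximal
      (ker_eval_injective.ne (Subtype.coe_injective.ne hne))
  obtain ⟨f, hf⟩ := Ideal.exists_forall_sub_mem_ideal hcop fun z => C (w z)
  exact ⟨f, fun z => by simpa [RingHom.mem_ker, sub_eq_zero] using hf z⟩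

/-- The degree-`d` part of `gr I(Z)` (see `mem_grIdeal_iff`). -/
noncomputable def leadingForms (F : Type*) [Field F] {σ : Type*} (Z : Set (σ → F)) (d : ℕ) :
    Submodule F (MvPolynomial σ F) :=
  ((vanishingIdeal F Z).restrictScalars F ⊓ restrictTotalDegree σ F d).map
    (homogeneousComponent d)

theorem mem_leadingForms {d : ℕ} {g : MvPolynomial σ F} :
    g ∈ leadingForms F Z d ↔
      ∃ u ∈ vanishingIdeal F Z, u.totalDegree ≤ d ∧ homogeneousComponent d u = g := by
  simp [leadingForms, mem_restrictTotalDegree, and_assoc]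

theorem leadingForms_le_homogeneousSubmodule (d : ℕ) :
    leadingForms F Z d ≤ homogeneousSubmodule σ F d := by
  rintro _ ⟨u, -, rfl⟩
  exact homogeneousComponent_mem d u

theorem leadingForms_le_grIdeal (d : ℕ) :
    leadingForms F Z d ≤ (grIdeal F Z).restrictScalars F := by
  intro g hg
  obtain ⟨u, hu, hud, rfl⟩ := mem_leadingForms.1 hg
  rcases hud.lt_or_eq with hlt | rfl
  · simp [homogeneousComponent_eq_zero d u hlt]
  · by_cases hu0 : u = 0
    · simp [hu0]
    · exact Ideal.subset_span ⟨u, hu, hu0, rfl⟩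

theorem mul_mem_leadingForms {k d : ℕ} {p g : MvPolynomial σ F} (hp : p.IsHomogeneous k)
    (hg : g ∈ leadingForms F Z d) : p * g ∈ leadingForms F Z (k + d) := by
  obtain ⟨u, hu, hud, rfl⟩ := mem_leadingForms.1 hg
  refine mem_leadingForms.2 ⟨p * u, Ideal.mul_mem_left _ _ hu,
    (totalDegree_mul p u).trans (add_le_add hp.totalDegree_le hud), ?_⟩
  simp [homogeneousComponent_mul_of_isHomogeneous_left hp]

theorem homogeneousComponent_mem_leadingForms {f : MvPolynomial σ F} (hf : f ∈ grIdeal F Z)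
    (n : ℕ) : homogeneousComponent n f ∈ leadingForms F Z n := by
  induction hf using Submodule.span_induction generalizing n with
  | mem g hg =>
    obtain ⟨u, hu, -, rfl⟩ := hg
    rw [homogeneousComponent_of_mem (homogeneousComponent_mem _ u)]
    split_ifs with h
    · exact mem_leadingForms.2 ⟨u, hu, h.ge, h ▸ rfl⟩
    · exact zero_mem _
  | zero => simp
  | add f g _ _ hf hg => simpa using add_mem (hf n) (hg n)
  | smul c g _ hg =>
    rw [smul_eq_mul, ← sum_homogeneousComponent c, Finset.sum_mul, map_sum]
    refine Submodule.sum_mem _ fun j _ => ?_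
    have hj := homogeneousComponent_isHomogeneous j c
    rw [homogeneousComponent_mul_of_isHomogeneous_left hj]
    split_ifs with hjn
    · simpa [Nat.add_sub_cancel' hjn] using mul_mem_leadingForms hj (hg (n - j))
    · exact zero_mem _

theorem mem_grIdeal_iff {f : MvPolynomial σ F} :
    f ∈ grIdeal F Z ↔ ∀ n, homogeneousComponent n f ∈ leadingForms F Z n := by
  refine ⟨homogeneousComponent_mem_leadingForms, fun h => ?_⟩
  rw [← sum_homogeneousComponent f]
  exact Submodule.sum_mem _ fun n _ => leadingForms_le_grIdeal n (h n)

theorem rename_mem_leadingForms {e : Equiv.Perm σ} (he : ∀ z ∈ Z, z ∘ e ∈ Z) {d : ℕ}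
    {g : MvPolynomial σ F} (hg : g ∈ leadingForms F Z d) :
    rename e g ∈ leadingForms F Z d := by
  obtain ⟨u, hu, hud, rfl⟩ := mem_leadingForms.1 hg
  exact mem_leadingForms.2 ⟨rename e u, rename_mem_vanishingIdeal he hu,
    (totalDegree_renameEquiv e u).trans_le hud, (rename_homogeneousComponent d u).symm⟩

theorem rename_mem_grIdeal {e : Equiv.Perm σ} (he : ∀ z ∈ Z, z ∘ e ∈ Z)
    {f : MvPolynomial σ F} (hf : f ∈ grIdeal F Z) :
    rename e f ∈ grIdeal F Z := by
  rw [mem_grIdeal_iff] at hf ⊢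
  intro n
  rw [← rename_homogeneousComponent]
  exact rename_mem_leadingForms he (hf n)

section GradedComplement

variable {H : ℕ → Submodule F (MvPolynomial σ F)}

theorem isCompl_grIdeal_iSup (hdisj : ∀ d, Disjoint (H d) (leadingForms F Z d))
    (hsup : ∀ d, H d ⊔ leadingForms F Z d = homogeneousSubmodule σ F d) :
    IsCompl ((grIdeal F Z).restrictScalars F) (⨆ d, H d) := by
  have hle d : H d ≤ homogeneousSubmodule σ F d := hsup d ▸ le_sup_left
  constructor
  · rw [Submodule.disjoint_def]
    intro f hJ hH
    rw [← sum_homogeneousComponent f]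
    exact Finset.sum_eq_zero fun n _ => Submodule.disjoint_def.1 (hdisj n) _
      (homogeneousComponent_mem_of_mem_iSup hle hH n) (homogeneousComponent_mem_leadingForms hJ n)
  · rw [codisjoint_iff_le_sup]
    intro f _
    rw [← sum_homogeneousComponent f]
    refine Submodule.sum_mem _ fun n _ => ?_
    have hn : H n ⊔ leadingForms F Z n ≤ (grIdeal F Z).restrictScalars F ⊔ ⨆ d, H d :=
      sup_comm (H n) _ ▸ sup_le_sup (leadingForms_le_grIdeal n) (le_iSup H n)
    exact hn (hsup n ▸ homogeneousComponent_mem n f)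

theorem isCompl_vanishingIdeal_iSup (hdisj : ∀ d, Disjoint (H d) (leadingForms F Z d))
    (hsup : ∀ d, H d ⊔ leadingForms F Z d = homogeneousSubmodule σ F d) :
    IsCompl ((vanishingIdeal F Z).restrictScalars F) (⨆ d, H d) := by
  have hle d : H d ≤ homogeneousSubmodule σ F d := hsup d ▸ le_sup_left
  constructor
  · rw [Submodule.disjoint_def]
    intro f hI hH
    by_contra hf
    exact homogeneousComponent_totalDegree_ne_zero hf <| Submodule.disjoint_def.1 (hdisj _) _
      (homogeneousComponent_mem_of_mem_iSup hle hH _) (mem_leadingForms.2 ⟨f, hI, le_rfl, rfl⟩)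
  · suffices ∀ N f, f.totalDegree = N → f ∈ (vanishingIdeal F Z).restrictScalars F ⊔ ⨆ d, H d
      from codisjoint_iff_le_sup.2 fun f _ => this _ f rfl
    intro N
    induction N using Nat.strong_induction_on with | _ N ih =>
    intro f hN
    -- the top form of `f` is `h + (top form of u)` with `h ∈ H N` and `u ∈ I(Z)`, so
    -- `f - h - u` has lower degree
    obtain ⟨h, hh, w, hw, hhw⟩ :=
      Submodule.mem_sup.1 (hsup N ▸ hN ▸ homogeneousComponent_mem f.totalDegree f)
    obtain ⟨u, hu, huN, rfl⟩ := mem_leadingForms.1 hw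
    have hr : f - h - u ∈ (vanishingIdeal F Z).restrictScalars F ⊔ ⨆ d, H d := by
      by_cases hr0 : f - h - u = 0
      · simp [hr0]
      refine ih _ (lt_of_le_of_ne ?_ fun hrN => ?_) _ rfl
      · refine (totalDegree_sub _ _).trans (max_le ((totalDegree_sub _ _).trans ?_) huN)
        exact max_le hN.le ((mem_homogeneousSubmodule _ _).1 (hle N hh)).totalDegree_le
      · refine homogeneousComponent_totalDegree_ne_zero hr0 ?_
        rw [hrN, map_sub, map_sub, homogeneousComponent_of_mem (hle N hh), if_pos rfl, ← hhw]
        abel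
    have hf : f = (f - h - u) + h + u := by abel
    rw [hf]
    exact add_mem (add_mem hr (Submodule.mem_sup_right (Submodule.mem_iSup_of_mem N hh)))
      (Submodule.mem_sup_left hu)

end GradedComplement

theorem exists_invariant_isCompl_grIdeal_vanishingIdeal {G : Type*} [Group G] [Finite G]
    [NeZero (Nat.card G : F)] (φ : G →* Equiv.Perm σ) (hZ : ∀ g, ∀ z ∈ Z, z ∘ φ g ∈ Z) :
    ∃ H : Submodule F (MvPolynomial σ F), (∀ g, ∀ f ∈ H, rename (φ g) f ∈ H) ∧
      IsCompl ((grIdeal F Z).restrictScalars F) H ∧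
      IsCompl ((vanishingIdeal F Z).restrictScalars F) H := by
  have hcompl (d : ℕ) := (renameRepresentation F φ).exists_invariant_complement_of_le
    (leadingForms_le_homogeneousSubmodule d) (fun g _ => rename_mem_leadingForms (hZ g))
    (fun g _ hf => IsHomogeneous.rename_isHomogeneous hf)
  choose H hHst hdisj hsup using hcompl
  refine ⟨⨆ d, H d, fun g f hf => ?_, isCompl_grIdeal_iSup hdisj hsup,
    isCompl_vanishingIdeal_iSup hdisj hsup⟩
  have hmap : (⨆ d, H d).map (renameRepresentation F φ g) ≤ ⨆ d, H d := by
    rw [Submodule.map_iSup]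
    exact iSup_mono fun d => Submodule.map_le_iff_le_comap.2 (hHst d g)
  exact hmap (Submodule.mem_map_of_mem hf)

theorem exists_quotient_grIdeal_equiv_of_isCompl (hZ : Z.Finite)
    {H : Submodule F (MvPolynomial σ F)} (hJ : IsCompl ((grIdeal F Z).restrictScalars F) H)
    (hI : IsCompl ((vanishingIdeal F Z).restrictScalars F) H) :
    ∃ e : (MvPolynomial σ F ⧸ grIdeal F Z) ≃ₗ[F] (Z → F), ∀ f (z : Z),
      e (Ideal.Quotient.mk _ f) z = eval (z : σ → F) (H.projection _ hJ.symm f) := by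
  let ψ : MvPolynomial σ F →ₗ[F] (Z → F) :=
    LinearMap.pi fun z => (aeval (z : σ → F)).toLinearMap
  have hker : LinearMap.ker ψ = (vanishingIdeal F Z).restrictScalars F := by
    ext f
    simp [ψ, mem_vanishingIdeal, funext_iff]
  have hsurj : Function.Surjective ψ := fun w =>
    (exists_eval_eq_of_finite hZ w).imp fun f hf => funext fun z => by simpa [ψ] using hf z
  let e : H ≃ₗ[F] (Z → F) := LinearEquiv.ofBijective (ψ.domRestrict H)
    ⟨LinearMap.injective_domRestrict_iff.2 (hker ▸ hI.symm.disjoint),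
      (LinearMap.surjective_domRestrict_iff hsurj).2 (hker ▸ hI.symm.codisjoint)⟩
  refine ⟨(Submodule.Quotient.restrictScalarsEquiv F (grIdeal F Z)).symm ≪≫ₗ
    ((grIdeal F Z).restrictScalars F).quotientEquivOfIsCompl H hJ ≪≫ₗ e, fun f z => ?_⟩
  rfl

end

/-- let a finite group `G` act on `F^n` by permuting coordinates
via `φ : G →* Perm (Fin n)` (so `(g • z) i = z ((φ g)⁻¹ i)`), and let `Z` be a
finite `G`-stable point set.  Then `I(Z)` and `gr I(Z)` are stable under the
substitution action `f ↦ rename (φ g) f` of `G` on `S = F[x_1,…,x_n]` (so `G`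
acts on `R(Z) = S/gr I(Z)`), and if `#G` is invertible in `F` then
`R(Z) ≅ F[Z]` as (ungraded) `G`-modules, where `F[Z]` is the permutation module
of functions on `Z` with `(g • h)(z) = h(g⁻¹ • z)`. -/
theorem orbit_harmonics_equivariant (F : Type*) [Field F] {n : ℕ}
    {G : Type*} [Group G] [Fintype G] (φ : G →* Equiv.Perm (Fin n))
    (Z : Set (Fin n → F)) (hZfin : Z.Finite)
    (hZstable : ∀ (g : G), ∀ z ∈ Z, (fun i => z ((φ g)⁻¹ i)) ∈ Z) :
    (∀ (g : G), ∀ f ∈ vanishingIdeal F Z,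
      MvPolynomial.rename (φ g) f ∈ vanishingIdeal F Z) ∧
    (∀ (g : G), ∀ f ∈ grIdeal F Z,
      MvPolynomial.rename (φ g) f ∈ grIdeal F Z) ∧
    ((Fintype.card G : F) ≠ 0 →
      ∃ e : (MvPolynomial (Fin n) F ⧸ grIdeal F Z) ≃ₗ[F] (Z → F),
        ∀ (g : G) (f : MvPolynomial (Fin n) F) (z z' : Z),
          (z' : Fin n → F) = (fun i => (z : Fin n → F) (φ g i)) →
          e (Ideal.Quotient.mk _ (MvPolynomial.rename (φ g) f)) z
            = e (Ideal.Quotient.mk _ f) z') := by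
  have hZ (g : G) : ∀ z ∈ Z, z ∘ φ g ∈ Z := fun z hz => by
    simpa [Function.comp_def] using hZstable g⁻¹ z hz
  refine ⟨fun g _ => rename_mem_vanishingIdeal (hZ g), fun g _ => rename_mem_grIdeal (hZ g),
    fun hcard => ?_⟩
  have : NeZero (Nat.card G : F) := ⟨by rwa [Nat.card_eq_fintype_card]⟩
  obtain ⟨H, hHst, hJ, hI⟩ := exists_invariant_isCompl_grIdeal_vanishingIdeal φ hZ
  obtain ⟨e, he⟩ := exists_quotient_grIdeal_equiv_of_isCompl hZfin hJ hI
  refine ⟨e, fun g f z z' hz' => ?_⟩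
  have hproj := Submodule.projection_apply_comm_of_mapsTo hJ.symm
    (MvPolynomial.rename (φ g)).toLinearMap (hHst g) (fun _ => rename_mem_grIdeal (hZ g)) f
  rw [AlgHom.toLinearMap_apply, AlgHom.toLinearMap_apply] at hproj
  rw [he, he, hproj, MvPolynomial.eval_rename, hz']
  rfl
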